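/- arXiv:math-ph/0402042 — 3 statements merged into one kernel-verified Lean document; each statement's English description precedes it below -/
import Mathlib

section
/- Let a > 1. For x ∈ ℝ, the Pastur cubic ξ³ − xξ² − (a²−1)ξ + xa² = 0 has a non-real root if and only if z₂ < |x| < z₁. Consequently ρ(x) > 0 for x ∈ (−z₁,−z₂) ∪ (z₂,z₁) and ρ(x) = 0 for every other real x; that is, the limiting mean eigenvalue density is supported on the two intervals [−z₁,−z₂] and [z₂,z₁]. -/
open MeasureTheory Filter Topology Polynomial Asymptotics

noncomputable section

/-- `√(1+8a²)` -/
def s8 (a : ℝ) : ℝ := Real.sqrt (1 + 8 * a ^ 2)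

/-- the critical point `p` -/
def pBr (a : ℝ) : ℝ := Real.sqrt (1 / 2 + a ^ 2 - s8 a / 2)

/-- the critical point `q` -/
def qBr (a : ℝ) : ℝ := Real.sqrt (1 / 2 + a ^ 2 + s8 a / 2)

/-- the right edge point `z₁` -/
def z1 (a : ℝ) : ℝ := qBr a * (s8 a + 3) / (s8 a + 1)

/-- the left edge point `z₂` of the right interval -/
def z2 (a : ℝ) : ℝ := pBr a * (s8 a - 3) / (s8 a - 1)

open scoped Classical in
/-- the Pastur density: `(1/π)|Im ξ|` for a non-real root `ξ` of the Pastur cubic, `0` else. -/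
def pasturRho (a x : ℝ) : ℝ :=
  if h : ∃ ξ : ℂ, ξ ^ 3 - (x : ℂ) * ξ ^ 2 - ((a : ℂ) ^ 2 - 1) * ξ + (x : ℂ) * (a : ℂ) ^ 2 = 0 ∧
      ξ.im ≠ 0
  then |h.choose.im| / Real.pi
  else 0

private lemma exists_cubic_root (b c d : ℂ) : ∃ z : ℂ, z^3 + b*z^2 + c*z + d = 0 := by
  have hdeg : (X^3 + C b * X^2 + C c * X + C d : ℂ[X]).degree = 3 := by
    compute_degree!
  obtain ⟨z, hz⟩ := Complex.exists_root (f := X^3 + C b * X^2 + C c * X + C d)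
    (by rw [hdeg]; norm_num)
  refine ⟨z, ?_⟩
  simpa only [Polynomial.IsRoot, Polynomial.eval_add, Polynomial.eval_mul,
    Polynomial.eval_pow, Polynomial.eval_X, Polynomial.eval_C] using hz

private lemma re_im_parts (x a α β : ℝ)
    (h : ((α:ℂ)+(β:ℂ)*Complex.I) ^ 3 - (x : ℂ) * ((α:ℂ)+(β:ℂ)*Complex.I) ^ 2
      - ((a : ℂ) ^ 2 - 1) * ((α:ℂ)+(β:ℂ)*Complex.I) + (x : ℂ) * (a : ℂ) ^ 2 = 0) :
    α^3 - 3*α*β^2 - x*(α^2-β^2) - (a^2-1)*α + x*a^2 = 0 ∧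
    3*α^2*β - β^3 - 2*x*α*β - (a^2-1)*β = 0 := by
  have key : ((α:ℂ)+(β:ℂ)*Complex.I) ^ 3 - (x : ℂ) * ((α:ℂ)+(β:ℂ)*Complex.I) ^ 2
      - ((a : ℂ) ^ 2 - 1) * ((α:ℂ)+(β:ℂ)*Complex.I) + (x : ℂ) * (a : ℂ) ^ 2
      = ((α^3 - 3*α*β^2 - x*(α^2-β^2) - (a^2-1)*α + x*a^2 : ℝ) : ℂ)
        + ((3*α^2*β - β^3 - 2*x*α*β - (a^2-1)*β : ℝ) : ℂ) * Complex.I := by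
    push_cast
    linear_combination (3*(α:ℂ)*(β:ℂ)^2 - (x:ℂ)*(β:ℂ)^2 + (β:ℂ)^3*Complex.I) * Complex.I_sq
  rw [key] at h
  simp [Complex.ext_iff, ← Complex.ofReal_pow] at h
  exact h

set_option maxHeartbeats 4000000 in
/-- For `a > 1`, the Pastur cubic at `x` has a non-real root iff
`z₂ < |x| < z₁`; hence `ρ > 0` on `(-z₁,-z₂) ∪ (z₂,z₁)` and `ρ = 0` elsewhere. -/
theorem statement1 (a : ℝ) (ha : 1 < a) :
    (∀ x : ℝ,
      (∃ ξ : ℂ, ξ ^ 3 - (x : ℂ) * ξ ^ 2 - ((a : ℂ) ^ 2 - 1) * ξ + (x : ℂ) * (a : ℂ) ^ 2 = 0 ∧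
        ξ.im ≠ 0) ↔ (z2 a < |x| ∧ |x| < z1 a)) ∧
    (∀ x : ℝ, z2 a < |x| → |x| < z1 a → 0 < pasturRho a x) ∧
    (∀ x : ℝ, ¬(z2 a < |x| ∧ |x| < z1 a) → pasturRho a x = 0) := by
  have ha0 : (0:ℝ) < a := lt_trans one_pos ha
  have ha2 : (1:ℝ) < a^2 := by nlinarith
  set s := s8 a with hs_def
  have hs2 : s^2 = 1+8*a^2 := Real.sq_sqrt (by positivity)
  have hs0 : 0 ≤ s := Real.sqrt_nonneg _
  have hs3 : 3 < s := by nlinarith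
  have hq2 : qBr a ^ 2 = 1/2+a^2+s/2 := Real.sq_sqrt (by positivity)
  have hp2' : (0:ℝ) < 1/2+a^2-s/2 := by nlinarith
  have hp2 : pBr a ^ 2 = 1/2+a^2-s/2 := Real.sq_sqrt hp2'.le
  have hppos : 0 < pBr a := Real.sqrt_pos.mpr hp2'
  have hqpos : 0 < qBr a := Real.sqrt_pos.mpr (by positivity)
  have hz2pos : 0 < z2 a := by
    rw [z2, ← hs_def]
    exact div_pos (mul_pos hppos (by linarith)) (by linarith)
  have hz1pos : 0 < z1 a := by
    rw [z1, ← hs_def]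
    exact div_pos (mul_pos hqpos (by linarith)) (by linarith)
  have hpq : pBr a ≤ qBr a := Real.sqrt_le_sqrt (by linarith)
  have hz2ltz1 : z2 a < z1 a := by
    rw [z2, z1, ← hs_def]
    rw [div_lt_div_iff₀ (by linarith) (by linarith)]
    nlinarith [mul_le_mul_of_nonneg_left hpq (le_of_lt (show (0:ℝ) < s*s - 1 by nlinarith))]
  have hu : z1 a ^ 2 * (s+1)^2 = (1/2+a^2+s/2)*(s+3)^2 := by
    rw [z1, ← hs_def, div_pow, div_mul_cancel₀ _ (by positivity : ((s+1)^2 : ℝ) ≠ 0),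
      mul_pow, hq2]
  have hv : z2 a ^ 2 * (s-1)^2 = (1/2+a^2-s/2)*(s-3)^2 := by
    have hne : ((s-1)^2 : ℝ) ≠ 0 := pow_ne_zero 2 (ne_of_gt (by linarith))
    rw [z2, ← hs_def, div_pow, div_mul_cancel₀ _ hne, mul_pow, hp2]
  have key : ∀ t : ℝ, 4*a^2*t^4+(1-20*a^2-8*a^4)*t^2+4*(a^2-1)^3
      = 4*a^2*(t^2 - z1 a ^ 2)*(t^2 - z2 a ^ 2) := by
    intro t
    have h0 : (4*a^2*t^4+(1-20*a^2-8*a^4)*t^2+4*(a^2-1)^3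
        - 4*a^2*(t^2 - z1 a ^ 2)*(t^2 - z2 a ^ 2)) * ((s+1)^2*(s-1)^2) = 0 := by
      linear_combination ((4:ℝ)*(a^2)*t^2 + (-8:ℝ)*s*(a^2)*t^2 + (4:ℝ)*s^2*(a^2)*t^2 + (-4:ℝ)*(z2 a)^2*(a^2) + (8:ℝ)*(z2 a)^2*s*(a^2) + (-4:ℝ)*(z2 a)^2*s^2*(a^2)) * hu + ((-18:ℝ)*(a^2) + (4:ℝ)*(a^2)*t^2 + (-36:ℝ)*(a^2)^2 + (-30:ℝ)*s*(a^2) + (8:ℝ)*s*(a^2)*t^2 + (-24:ℝ)*s*(a^2)^2 + (-14:ℝ)*s^2*(a^2) + (4:ℝ)*s^2*(a^2)*t^2 + (-4:ℝ)*s^2*(a^2)^2 + (-2:ℝ)*s^3*(a^2)) * hv + ((4:ℝ) + (-1:ℝ)*t^2 + (37:ℝ)*(a^2) + (-8:ℝ)*(a^2)*t^2 + (40:ℝ)*(a^2)^2 + (-4:ℝ)*s^2 + (1:ℝ)*s^2*t^2 + (-6:ℝ)*s^2*(a^2) + (-8:ℝ)*s^2*(a^2)^2 + (1:ℝ)*s^4*(a^2))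 * hs2
    have hne : ((s+1)^2*(s-1)^2 : ℝ) ≠ 0 :=
      mul_ne_zero (pow_ne_zero 2 (ne_of_gt (by linarith)))
        (pow_ne_zero 2 (ne_of_gt (by linarith)))
    rcases mul_eq_zero.mp h0 with h | h
    · linarith
    · exact absurd h hne
  have huv : z2 a ^ 2 < z1 a ^ 2 := by nlinarith
  have hiff : ∀ x : ℝ,
      (∃ ξ : ℂ, ξ ^ 3 - (x : ℂ) * ξ ^ 2 - ((a : ℂ) ^ 2 - 1) * ξ + (x : ℂ) * (a : ℂ) ^ 2 = 0 ∧
        ξ.im ≠ 0) ↔ (z2 a < |x| ∧ |x| < z1 a) := by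
    intro x
    constructor
    · rintro ⟨ξ, hr, hi⟩
      rw [← Complex.re_add_im ξ] at hr
      obtain ⟨h1, h2⟩ := re_im_parts x a ξ.re ξ.im hr
      set α := ξ.re with hα
      set β := ξ.im with hβ
      have hB : β^2 = 3*α^2 - 2*x*α - (a^2-1) := by
        have h2' : β * (3*α^2 - β^2 - 2*x*α - (a^2-1)) = 0 := by linear_combination h2
        rcases mul_eq_zero.mp h2' with h | h
        · exact absurd h hi
        · linarith
      have hβpos : 0 < β^2 := by positivity
      have hneg : 4*a^2*x^4+(1-20*a^2-8*a^4)*x^2+4*(a^2-1)^3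
          = -(4*β^2*((3*α-x)^2+β^2)^2) := by
        linear_combination ((4:ℝ) + (-8:ℝ)*(a^2) + (4:ℝ)*(a^2)^2 + (-1:ℝ)*x^2 + (28:ℝ)*x^2*(a^2) + (4:ℝ)*β^2 + (-4:ℝ)*β^2*(a^2) + (8:ℝ)*β^2*x^2 + (4:ℝ)*β^4 + (17:ℝ)*α*x + (-98:ℝ)*α*x*(a^2) + (2:ℝ)*α*x^3 + (-56:ℝ)*α*β^2*x + (-66:ℝ)*α^2 + (66:ℝ)*α^2*(a^2) + (-26:ℝ)*α^2*x^2 + (84:ℝ)*α^2*β^2 + (96:ℝ)*α^3*x + (-72:ℝ)*α^4) * hB + ((9:ℝ)*x + (-36:ℝ)*x*(a^2) + (4:ℝ)*x^3 + (-54:ℝ)*α + (54:ℝ)*α*(a^2) + (-54:ℝ)*α*x^2 + (216:ℝ)*α^2*x + (-216:ℝ)*α^3) * h1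
      have hfac : 0 < (3*α-x)^2+β^2 := by positivity
      have hD : 4*a^2*(x^2 - z1 a ^ 2)*(x^2 - z2 a ^ 2) < 0 := by
        rw [← key x, hneg]
        have : 0 < 4*β^2*((3*α-x)^2+β^2)^2 := by positivity
        linarith
      have hx2lt : x^2 < z1 a ^ 2 := by
        by_contra hc
        push_neg at hc
        nlinarith [mul_nonneg (by linarith : (0:ℝ) ≤ x^2 - z1 a ^ 2)
          (by linarith : (0:ℝ) ≤ x^2 - z2 a ^ 2), mul_pos ha0 ha0]
      have hx2gt : z2 a ^ 2 < x^2 := by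
        by_contra hc
        push_neg at hc
        nlinarith [mul_nonneg (by linarith : (0:ℝ) ≤ z1 a ^ 2 - x^2)
          (by linarith : (0:ℝ) ≤ z2 a ^ 2 - x^2), mul_pos ha0 ha0]
      constructor
      · exact lt_of_pow_lt_pow_left₀ 2 (abs_nonneg x) (by rw [sq_abs]; exact hx2gt)
      · exact lt_of_pow_lt_pow_left₀ 2 hz1pos.le (by rw [sq_abs]; exact hx2lt)
    · rintro ⟨hl, hu'⟩
      have hx2a : z2 a ^ 2 < x^2 := by
        rw [← sq_abs x]; exact pow_lt_pow_left₀ hl hz2pos.le (by norm_num : (2:ℕ) ≠ 0)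
      have hx2b : x^2 < z1 a ^ 2 := by
        rw [← sq_abs x]; exact pow_lt_pow_left₀ hu' (abs_nonneg x) (by norm_num : (2:ℕ) ≠ 0)
      have hD : 4*a^2*x^4+(1-20*a^2-8*a^4)*x^2+4*(a^2-1)^3 < 0 := by
        rw [key x]
        have h1 := mul_neg_of_neg_of_pos (by linarith : x^2 - z1 a ^ 2 < 0)
          (by linarith : (0:ℝ) < x^2 - z2 a ^ 2)
        nlinarith
      by_contra hno
      push_neg at hno
      obtain ⟨t1, ht1'⟩ := exists_cubic_root (-(x:ℂ)) (-((a:ℂ)^2-1)) ((x:ℂ)*(a:ℂ)^2)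
      have ht1 : t1 ^ 3 - (x : ℂ) * t1 ^ 2 - ((a : ℂ) ^ 2 - 1) * t1 + (x : ℂ) * (a : ℂ) ^ 2
          = 0 := by linear_combination ht1'
      obtain ⟨d, hd⟩ := IsAlgClosed.exists_pow_nat_eq
        ((t1 - (x:ℂ))^2 - 4*(t1^2 - (x:ℂ)*t1 - ((a:ℂ)^2-1))) (zero_lt_two)
      set t2 : ℂ := (-(t1 - (x:ℂ)) + d)/2 with ht2def
      set t3 : ℂ := (-(t1 - (x:ℂ)) - d)/2 with ht3def
      have ht2 : t2 ^ 3 - (x : ℂ) * t2 ^ 2 - ((a : ℂ) ^ 2 - 1) * t2 + (x : ℂ) * (a : ℂ) ^ 2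
          = 0 := by
        rw [ht2def]; linear_combination (((-(t1 - (x:ℂ)) + d)/2 - t1)/4) * hd + ht1
      have ht3 : t3 ^ 3 - (x : ℂ) * t3 ^ 2 - ((a : ℂ) ^ 2 - 1) * t3 + (x : ℂ) * (a : ℂ) ^ 2
          = 0 := by
        rw [ht3def]; linear_combination (((-(t1 - (x:ℂ)) - d)/2 - t1)/4) * hd + ht1
      have hv1 : t1 + t2 + t3 = (x:ℂ) := by rw [ht2def, ht3def]; ring
      have hv2 : t1*t2 + t1*t3 + t2*t3 = -((a:ℂ)^2 - 1) := by
        rw [ht2def, ht3def]; linear_combination (-(1:ℂ)/4) * hd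
      have hv3 : t1*t2*t3 = -(x:ℂ)*(a:ℂ)^2 := by
        rw [ht2def, ht3def]; linear_combination (-t1/4) * hd + ht1
      have e1 : t1 = ((t1.re : ℝ) : ℂ) := Complex.ext rfl (by simp [hno t1 ht1])
      have e2 : t2 = ((t2.re : ℝ) : ℂ) := Complex.ext rfl (by simp [hno t2 ht2])
      have e3 : t3 = ((t3.re : ℝ) : ℂ) := Complex.ext rfl (by simp [hno t3 ht3])
      set r1 := t1.re
      set r2 := t2.re
      set r3 := t3.re
      rw [e1, e2, e3] at hv1 hv2 hv3
      have hr1 : r1 + r2 + r3 = x := by exact_mod_cast hv1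
      have hr2 : r1*r2 + r1*r3 + r2*r3 = -(a^2 - 1) := by exact_mod_cast hv2
      have hr3 : r1*r2*r3 = -x*a^2 := by exact_mod_cast hv3
      have hsq : 4*a^2*x^4+(1-20*a^2-8*a^4)*x^2+4*(a^2-1)^3
          = ((r1-r2)*(r2-r3)*(r1-r3))^2 := by
        linear_combination ((-1:ℝ)*x + (20:ℝ)*x*(a^2) + (8:ℝ)*x*(a^2)^2 + (-4:ℝ)*x^3*(a^2) + (-28:ℝ)*r3 + (20:ℝ)*r3*(a^2) + (8:ℝ)*r3*(a^2)^2 + (-4:ℝ)*r3*x^2*(a^2) + (-4:ℝ)*r3^2*x*(a^2) + (4:ℝ)*r3^3 + (-4:ℝ)*r3^3*(a^2) + (-28:ℝ)*r2 + (20:ℝ)*r2*(a^2) + (8:ℝ)*r2*(a^2)^2 + (-4:ℝ)*r2*x^2*(a^2) + (-8:ℝ)*r2*r3*x*(a^2) + (48:ℝ)*r2*r3^2 + (-12:ℝ)*r2*r3^2*(a^2) + (-4:ℝ)*r2*r3^4 + (-4:ℝ)*r2^2*x*(a^2) + (48:ℝ)*r2^2*r3 + (-12:ℝ)*r2^2*r3*(a^2)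 + (-21:ℝ)*r2^2*r3^3 + (4:ℝ)*r2^3 + (-4:ℝ)*r2^3*(a^2) + (-21:ℝ)*r2^3*r3^2 + (-4:ℝ)*r2^4*r3 + (-28:ℝ)*r1 + (20:ℝ)*r1*(a^2) + (8:ℝ)*r1*(a^2)^2 + (-4:ℝ)*r1*x^2*(a^2) + (-8:ℝ)*r1*r3*x*(a^2) + (48:ℝ)*r1*r3^2 + (-12:ℝ)*r1*r3^2*(a^2) + (-4:ℝ)*r1*r3^4 + (-8:ℝ)*r1*r2*x*(a^2) + (159:ℝ)*r1*r2*r3 + (-24:ℝ)*r1*r2*r3*(a^2) + (-46:ℝ)*r1*r2*r3^3 + (48:ℝ)*r1*r2^2 + (-12:ℝ)*r1*r2^2*(a^2) + (-120:ℝ)*r1*r2^2*r3^2 + (-46:ℝ)*r1*r2^3*r3 + (-4:ℝ)*r1*r2^4 + (-4:ℝ)*r1^2*x*(a^2) + (48:ℝ)*r1^2*r3 + (-12:ℝ)*r1^2*r3*(a^2) + (-21:ℝ)*r1^2*r3^3 + (48:ℝ)*r1^2*r2 + (-12:ℝ)*r1^2*r2*(a^2) + (-120:ℝ)*r1^2*r2*r3^2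 + (-120:ℝ)*r1^2*r2^2*r3 + (-21:ℝ)*r1^2*r2^3 + (4:ℝ)*r1^3 + (-4:ℝ)*r1^3*(a^2) + (-21:ℝ)*r1^3*r3^2 + (-46:ℝ)*r1^3*r2*r3 + (-21:ℝ)*r1^3*r2^2 + (-4:ℝ)*r1^4*r3 + (-4:ℝ)*r1^4*r2) * hr1 + ((4:ℝ) + (-8:ℝ)*(a^2) + (4:ℝ)*(a^2)^2 + (27:ℝ)*r3*x + (-28:ℝ)*r3^2 + (-8:ℝ)*r3^2*(a^2) + (-4:ℝ)*r3^3*x + (4:ℝ)*r3^4 + (27:ℝ)*r2*x + (-52:ℝ)*r2*r3 + (-20:ℝ)*r2*r3*(a^2) + (-21:ℝ)*r2*r3^2*x + (24:ℝ)*r2*r3^3 + (-28:ℝ)*r2^2 + (-8:ℝ)*r2^2*(a^2) + (-21:ℝ)*r2^2*r3*x + (44:ℝ)*r2^2*r3^2 + (-4:ℝ)*r2^3*x + (24:ℝ)*r2^3*r3 + (4:ℝ)*r2^4 + (27:ℝ)*r1*x + (-52:ℝ)*r1*r3 + (-20:ℝ)*r1*r3*(a^2) + (-21:ℝ)*r1*r3^2*x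 + (24:ℝ)*r1*r3^3 + (-52:ℝ)*r1*r2 + (-20:ℝ)*r1*r2*(a^2) + (-78:ℝ)*r1*r2*r3*x + (96:ℝ)*r1*r2*r3^2 + (-21:ℝ)*r1*r2^2*x + (96:ℝ)*r1*r2^2*r3 + (24:ℝ)*r1*r2^3 + (-28:ℝ)*r1^2 + (-8:ℝ)*r1^2*(a^2) + (-21:ℝ)*r1^2*r3*x + (44:ℝ)*r1^2*r3^2 + (-21:ℝ)*r1^2*r2*x + (96:ℝ)*r1^2*r2*r3 + (44:ℝ)*r1^2*r2^2 + (-4:ℝ)*r1^3*x + (24:ℝ)*r1^3*r3 + (24:ℝ)*r1^3*r2 + (4:ℝ)*r1^4) * hr2 + ((-27:ℝ)*r3 + (4:ℝ)*r3^3 + (-27:ℝ)*r2 + (21:ℝ)*r2*r3^2 + (21:ℝ)*r2^2*r3 + (4:ℝ)*r2^3 + (-27:ℝ)*r1 + (21:ℝ)*r1*r3^2 + (78:ℝ)*r1*r2*r3 + (21:ℝ)*r1*r2^2 + (21:ℝ)*r1^2*r3 + (21:ℝ)*r1^2*r2 + (4:ℝ)*r1^3) * hr3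
      nlinarith [sq_nonneg ((r1-r2)*(r2-r3)*(r1-r3))]
  refine ⟨hiff, ?_, ?_⟩
  · intro x h1 h2
    have hex := (hiff x).mpr ⟨h1, h2⟩
    unfold pasturRho
    rw [dif_pos hex]
    exact div_pos (abs_pos.mpr hex.choose_spec.2) Real.pi_pos
  · intro x hn
    unfold pasturRho
    rw [dif_neg (fun hex => hn ((hiff x).mp hex))]

end
end

section
/- Let a > 1. The Pastur density ρ is real analytic on the open intervals (z₂,z₁) and (−z₁,−z₂), and it is even: ρ(−x) = ρ(x) for all x ∈ ℝ. -/
open MeasureTheory Filter Topology Polynomial Asymptotics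

noncomputable section

/-- real cube root (for nonzero argument) -/
def cbrt (y : ℝ) : ℝ := y * (y ^ 2) ^ (-(1/3) : ℝ)

lemma cbrt_cube (y : ℝ) : cbrt y ^ 3 = y := by
  rcases eq_or_ne y 0 with h | h
  · simp [cbrt, h]
  · have h2 : (0:ℝ) < y ^ 2 := by positivity
    rw [cbrt, mul_pow, ← Real.rpow_natCast ((y^2) ^ (-(1/3):ℝ)) 3, ← Real.rpow_mul h2.le]
    norm_num
    rw [Real.rpow_neg_one]
    field_simp

lemma analyticAt_rpow_const (c : ℝ) {y : ℝ} (hy : 0 < y) :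
    AnalyticAt ℝ (fun z : ℝ => z ^ c) y := by
  have m : (y : ℂ) ∈ Complex.slitPlane := by
    rw [Complex.mem_slitPlane_iff]; left; simpa using hy
  have h1 : AnalyticAt ℂ (fun w : ℂ => w ^ (c : ℂ)) (y : ℂ) :=
    analyticAt_id.cpow analyticAt_const m
  have h2 : AnalyticAt ℝ (fun x : ℝ => ((x:ℂ) ^ (c:ℂ)).re) y := by
    exact (Complex.reCLM.analyticAt _).comp
      ((h1.restrictScalars).comp (Complex.ofRealCLM.analyticAt y))
  apply h2.congr
  filter_upwards [eventually_gt_nhds hy] with z hz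
  rw [← Complex.ofReal_cpow hz.le]
  simp

lemma analyticAt_sqrt {y : ℝ} (hy : 0 < y) : AnalyticAt ℝ Real.sqrt y := by
  apply (analyticAt_rpow_const (1/2) hy).congr
  filter_upwards [eventually_gt_nhds hy] with z hz
  rw [Real.sqrt_eq_rpow]

lemma analyticAt_cbrt {y : ℝ} (hy : y ≠ 0) : AnalyticAt ℝ cbrt y := by
  have h2 : (0:ℝ) < y ^ 2 := by positivity
  have hsq : AnalyticAt ℝ (fun z : ℝ => z ^ 2) y := by
    exact (analyticAt_id (𝕜 := ℝ) (E := ℝ)).pow 2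
  have h3 : AnalyticAt ℝ ((fun z : ℝ => z ^ (-(1/3) : ℝ)) ∘ (fun z : ℝ => z ^ 2)) y :=
    AnalyticAt.comp (analyticAt_rpow_const (-(1/3)) h2) hsq
  apply (analyticAt_id.mul h3).congr
  filter_upwards with z
  simp [cbrt, Function.comp]

def Pc (a x : ℝ) : ℝ := -(x^2/3 + a^2 - 1)
def Qc (a x : ℝ) : ℝ := x*(2*a^2+1)/3 - 2*x^3/27
def Dc (a x : ℝ) : ℝ := (Qc a x/2)^2 + (Pc a x/3)^3
def t0 (a x : ℝ) : ℝ :=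
  cbrt (-(Qc a x)/2 + Real.sqrt (Dc a x)) + cbrt (-(Qc a x)/2 - Real.sqrt (Dc a x))
def bSq (a x : ℝ) : ℝ := Pc a x + 3 * t0 a x^2/4

variable {a : ℝ}

lemma s8_sq (ha : 1 < a) : s8 a ^ 2 = 1 + 8 * a ^ 2 :=
  Real.sq_sqrt (by positivity)

lemma s8_gt3 (ha : 1 < a) : 3 < s8 a := by
  rw [show (3:ℝ) = Real.sqrt 9 by
    rw [show (9:ℝ) = 3^2 by norm_num, Real.sqrt_sq]; norm_num]
  apply Real.sqrt_lt_sqrt (by norm_num)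
  nlinarith

lemma qBr_sq (ha : 1 < a) : qBr a ^ 2 = (s8 a + 1) * (s8 a + 3) / 8 := by
  have h := s8_sq ha
  have h3 := s8_gt3 ha
  rw [qBr, Real.sq_sqrt (by nlinarith)]
  nlinarith

lemma pBr_sq (ha : 1 < a) : pBr a ^ 2 = (s8 a - 1) * (s8 a - 3) / 8 := by
  have h := s8_sq ha
  have h3 := s8_gt3 ha
  have harg : (0:ℝ) ≤ 1 / 2 + a ^ 2 - s8 a / 2 := by nlinarith
  rw [pBr, Real.sq_sqrt harg]
  nlinarith

lemma pBr_pos (ha : 1 < a) : 0 < pBr a := by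
  have h := s8_sq ha
  apply Real.sqrt_pos.2
  nlinarith [s8_gt3 ha, Real.sqrt_nonneg (1 + 8*a^2)]

lemma qBr_pos (ha : 1 < a) : 0 < qBr a := by
  apply Real.sqrt_pos.2
  nlinarith [s8_gt3 ha]

lemma z1_sq (ha : 1 < a) : z1 a ^ 2 = (s8 a + 3)^3 / (8 * (s8 a + 1)) := by
  have h3 := s8_gt3 ha
  have h1 : s8 a + 1 ≠ 0 := by linarith
  rw [z1, div_pow, mul_pow, qBr_sq ha]
  field_simp

lemma z2_sq (ha : 1 < a) : z2 a ^ 2 = (s8 a - 3)^3 / (8 * (s8 a - 1)) := by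
  have h3 := s8_gt3 ha
  have h1 : s8 a - 1 ≠ 0 := by linarith
  rw [z2, div_pow, mul_pow, pBr_sq ha]
  field_simp

lemma z1_pos (ha : 1 < a) : 0 < z1 a := by
  have h3 := s8_gt3 ha
  have := qBr_pos ha
  apply div_pos (by nlinarith) (by linarith)

lemma z2_pos (ha : 1 < a) : 0 < z2 a := by
  have h3 := s8_gt3 ha
  have := pBr_pos ha
  apply div_pos (by nlinarith) (by linarith)

lemma D_factored (ha : 1 < a) (x : ℝ) :
    Dc a x = a^2/27 * (x^2 - z2 a ^2) * (z1 a ^2 - x^2) := by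
  have h3 := s8_gt3 ha
  have hs := s8_sq ha
  have h1 : s8 a + 1 ≠ 0 := by linarith
  have h2 : s8 a - 1 ≠ 0 := by linarith
  have ha2 : a^2 = (s8 a ^2 - 1)/8 := by linarith
  rw [z1_sq ha, z2_sq ha, Dc, Pc, Qc]
  rw [ha2]
  field_simp
  ring

lemma D_pos (ha : 1 < a) {x : ℝ} (h1 : z2 a ^ 2 < x^2) (h2 : x^2 < z1 a ^2) :
    0 < Dc a x := by
  rw [D_factored ha]
  have : 0 < a^2/27 := by positivity
  apply mul_pos (mul_pos this (by linarith)) (by linarith)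

lemma Pc_neg (ha : 1 < a) (x : ℝ) : Pc a x < 0 := by
  rw [Pc]; nlinarith

lemma uv_eq {a x : ℝ} (hD : 0 ≤ Dc a x) :
    (-(Qc a x)/2 + Real.sqrt (Dc a x)) * (-(Qc a x)/2 - Real.sqrt (Dc a x))
      = (-(Pc a x)/3)^3 := by
  have h2 := Real.sq_sqrt hD
  have : (-(Qc a x)/2 + Real.sqrt (Dc a x)) * (-(Qc a x)/2 - Real.sqrt (Dc a x))
      = (Qc a x)^2/4 - Real.sqrt (Dc a x)^2 := by ring
  rw [this, h2, Dc]
  ring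

lemma cube_inj {u v : ℝ} (h : u^3 = v^3) : u = v := by
  have := Odd.strictMono_pow (R := ℝ) (⟨1, by norm_num⟩ : Odd 3)
  exact this.injective h

lemma cardano {a x : ℝ} (hD : 0 ≤ Dc a x) :
    t0 a x ^ 3 = -(Qc a x) - Pc a x * t0 a x := by
  set u := -(Qc a x)/2 + Real.sqrt (Dc a x) with hu
  set v := -(Qc a x)/2 - Real.sqrt (Dc a x) with hv
  have hA : cbrt u ^ 3 = u := cbrt_cube u
  have hB : cbrt v ^ 3 = v := cbrt_cube v
  have hAB : (cbrt u * cbrt v) ^ 3 = (-(Pc a x)/3)^3 := by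
    rw [mul_pow, hA, hB]; exact uv_eq hD
  have hABe : cbrt u * cbrt v = -(Pc a x)/3 := cube_inj hAB
  have huv : u + v = -(Qc a x) := by rw [hu, hv]; ring
  have : t0 a x = cbrt u + cbrt v := rfl
  rw [this]
  have expand : (cbrt u + cbrt v)^3
      = cbrt u ^3 + cbrt v ^3 + 3*(cbrt u * cbrt v)*(cbrt u + cbrt v) := by ring
  rw [expand, hA, hB, hABe]
  linarith [huv]

lemma bSq_identity {a x : ℝ} (hD : 0 ≤ Dc a x) :
    108 * Dc a x = 4 * bSq a x * (3 * t0 a x ^2 + Pc a x)^2 := by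
  have hC' : t0 a x ^ 3 + Pc a x * t0 a x + Qc a x = 0 := by
    have := cardano hD
    linarith [this]
  rw [Dc, bSq]
  linear_combination (27*(Qc a x - t0 a x^3 - Pc a x * t0 a x)) * hC'

lemma bSq_pos {a x : ℝ} (hD : 0 < Dc a x) : 0 < bSq a x := by
  have h := bSq_identity hD.le
  nlinarith [sq_nonneg (3 * t0 a x ^2 + Pc a x), sq_nonneg (bSq a x)]

lemma cubic_factorization {a x : ℝ} (hD : 0 < Dc a x) (ξ : ℂ) :
    ξ^3 - (x:ℂ)*ξ^2 - ((a:ℂ)^2 - 1)*ξ + (x:ℂ)*(a:ℂ)^2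
      = (ξ - ((x/3 + t0 a x : ℝ) : ℂ)) *
        (ξ - (((x/3 - t0 a x/2 : ℝ) : ℂ) + (Real.sqrt (bSq a x) : ℂ) * Complex.I)) *
        (ξ - (((x/3 - t0 a x/2 : ℝ) : ℂ) - (Real.sqrt (bSq a x) : ℂ) * Complex.I)) := by
  have hb : (Real.sqrt (bSq a x))^2 = bSq a x := Real.sq_sqrt (bSq_pos hD).le
  have hC := cardano hD.le
  have hb2 : (Real.sqrt (bSq a x))^2 = -(x^2/3 + a^2 - 1) + 3 * t0 a x^2/4 := by
    rw [hb, bSq, Pc]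
  rw [Qc, Pc] at hC
  have hbc := congrArg (fun t : ℝ => (t:ℂ)) hb2
  have hCc := congrArg (fun t : ℝ => (t:ℂ)) hC
  push_cast at hbc hCc
  have hI : (Complex.I)^2 = -1 := Complex.I_sq
  push_cast
  linear_combination hCc - (ξ - ((x:ℂ)/3 + (t0 a x : ℂ))) * hbc
    + ((ξ - ((x:ℂ)/3 + (t0 a x : ℂ))) * ((Real.sqrt (bSq a x) : ℂ))^2) * hI

lemma exists_nonreal_root {a x : ℝ} (hD : 0 < Dc a x) :
    ∃ ξ : ℂ, ξ ^ 3 - (x : ℂ) * ξ ^ 2 - ((a : ℂ) ^ 2 - 1) * ξ + (x : ℂ) * (a : ℂ) ^ 2 = 0 ∧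
      ξ.im ≠ 0 := by
  refine ⟨((x/3 - t0 a x/2 : ℝ) : ℂ) + (Real.sqrt (bSq a x) : ℂ) * Complex.I, ?_, ?_⟩
  · rw [cubic_factorization hD]; ring
  · have : (((x/3 - t0 a x/2 : ℝ) : ℂ) + (Real.sqrt (bSq a x) : ℂ) * Complex.I).im
        = Real.sqrt (bSq a x) := by simp
    rw [this]
    exact (Real.sqrt_pos.2 (bSq_pos hD)).ne'

lemma rho_eq {a x : ℝ} (hD : 0 < Dc a x) :
    pasturRho a x = Real.sqrt (bSq a x) / Real.pi := by
  have hex := exists_nonreal_root hD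
  rw [pasturRho, dif_pos hex]
  obtain ⟨hroot, him⟩ := hex.choose_spec
  set ξ₀ := hex.choose with hξ₀
  rw [cubic_factorization hD ξ₀] at hroot
  have hB : (0:ℝ) ≤ Real.sqrt (bSq a x) := Real.sqrt_nonneg _
  rcases mul_eq_zero.1 hroot with h12 | h3
  · rcases mul_eq_zero.1 h12 with h1 | h2
    · exfalso
      apply him
      have : ξ₀ = ((x/3 + t0 a x : ℝ) : ℂ) := by
        have := sub_eq_zero.1 h1; exact this
      rw [this]; simp
    · have hv : ξ₀ = ((x/3 - t0 a x/2 : ℝ) : ℂ) + (Real.sqrt (bSq a x) : ℂ) * Complex.I :=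
        sub_eq_zero.1 h2
      rw [hv]
      simp [abs_of_nonneg hB]
  · have hv : ξ₀ = ((x/3 - t0 a x/2 : ℝ) : ℂ) - (Real.sqrt (bSq a x) : ℂ) * Complex.I :=
      sub_eq_zero.1 h3
    rw [hv]
    simp [abs_of_nonneg hB]

lemma continuous_Dc (a : ℝ) : Continuous (Dc a) := by
  unfold Dc Qc Pc
  fun_prop

lemma analyticAt_formula {a x : ℝ} (ha : 1 < a) (hD : 0 < Dc a x) :
    AnalyticAt ℝ (fun y => Real.sqrt (bSq a y) / Real.pi) x := by
  have hQ : AnalyticAt ℝ (Qc a) x := by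
    have h : Qc a = fun y => ((2*a^2+1)/3) * y - (2/27) * y^3 := by
      funext y; rw [Qc]; ring
    rw [h]
    exact (analyticAt_const.mul analyticAt_id).sub
      (analyticAt_const.mul ((analyticAt_id (𝕜 := ℝ) (E := ℝ)).pow 3))
  have hP : AnalyticAt ℝ (Pc a) x := by
    have h : Pc a = fun y => (1 - a^2) - (1/3) * y^2 := by
      funext y; rw [Pc]; ring
    rw [h]
    exact analyticAt_const.sub (analyticAt_const.mul ((analyticAt_id (𝕜 := ℝ) (E := ℝ)).pow 2))
  have hDan : AnalyticAt ℝ (Dc a) x := by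
    have h : Dc a = fun y => (Qc a y * (1/2))^2 + (Pc a y * (1/3))^3 := by
      funext y; rw [Dc]; ring
    rw [h]
    exact ((hQ.mul analyticAt_const).pow 2).add ((hP.mul analyticAt_const).pow 3)
  have hsD : AnalyticAt ℝ (fun y => Real.sqrt (Dc a y)) x := by
    have := (analyticAt_sqrt hD).comp hDan
    exact this.congr (by filter_upwards with y; simp [Function.comp])
  have hu : AnalyticAt ℝ (fun y => -(Qc a y)/2 + Real.sqrt (Dc a y)) x := by
    have h1 : AnalyticAt ℝ (fun y => -(Qc a y)/2) x := by
      have h : (fun y => -(Qc a y)/2) = fun y => Qc a y * (-(1/2) : ℝ) := by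
        funext y; ring
      rw [h]; exact hQ.mul analyticAt_const
    exact h1.add hsD
  have hv : AnalyticAt ℝ (fun y => -(Qc a y)/2 - Real.sqrt (Dc a y)) x := by
    have h1 : AnalyticAt ℝ (fun y => -(Qc a y)/2) x := by
      have h : (fun y => -(Qc a y)/2) = fun y => Qc a y * (-(1/2) : ℝ) := by
        funext y; ring
      rw [h]; exact hQ.mul analyticAt_const
    exact h1.sub hsD
  -- nonvanishing of u and v at x
  have huv : (-(Qc a x)/2 + Real.sqrt (Dc a x)) * (-(Qc a x)/2 - Real.sqrt (Dc a x))
      = (-(Pc a x)/3)^3 := uv_eq hD.le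
  have hPneg : Pc a x < 0 := Pc_neg ha x
  have huvpos : 0 < (-(Qc a x)/2 + Real.sqrt (Dc a x)) * (-(Qc a x)/2 - Real.sqrt (Dc a x)) := by
    rw [huv]
    have : 0 < -Pc a x/3 := by linarith
    exact pow_pos this 3
  have hu0 : -(Qc a x)/2 + Real.sqrt (Dc a x) ≠ 0 := by
    intro h; rw [h, zero_mul] at huvpos; exact lt_irrefl 0 huvpos
  have hv0 : -(Qc a x)/2 - Real.sqrt (Dc a x) ≠ 0 := by
    intro h; rw [h, mul_zero] at huvpos; exact lt_irrefl 0 huvpos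
  have ht : AnalyticAt ℝ (t0 a) x := by
    have h1 := AnalyticAt.comp (g := cbrt)
      (f := fun y => -(Qc a y)/2 + Real.sqrt (Dc a y)) (analyticAt_cbrt hu0) hu
    have h2 := AnalyticAt.comp (g := cbrt)
      (f := fun y => -(Qc a y)/2 - Real.sqrt (Dc a y)) (analyticAt_cbrt hv0) hv
    have := h1.add h2
    exact this.congr (by filter_upwards with y; simp [Function.comp, t0])
  have hbs : AnalyticAt ℝ (bSq a) x := by
    have h : bSq a = fun y => Pc a y + (t0 a y)^2 * (3/4) := by
      funext y; rw [bSq]; ring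
    rw [h]
    exact hP.add ((ht.pow 2).mul analyticAt_const)
  have hsb : AnalyticAt ℝ (fun y => Real.sqrt (bSq a y)) x := by
    have := (analyticAt_sqrt (bSq_pos hD)).comp hbs
    exact this.congr (by filter_upwards with y; simp [Function.comp])
  exact hsb.div analyticAt_const Real.pi_ne_zero

lemma analyticAt_rho {a x : ℝ} (ha : 1 < a) (hD : 0 < Dc a x) :
    AnalyticAt ℝ (pasturRho a) x := by
  apply (analyticAt_formula ha hD).congr
  have ho : IsOpen {y : ℝ | 0 < Dc a y} := isOpen_lt continuous_const (continuous_Dc a)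
  filter_upwards [ho.mem_nhds hD] with y hy
  exact (rho_eq hy).symm

lemma im_unique {a x : ℝ} {ξ₁ ξ₂ : ℂ}
    (h1 : ξ₁ ^ 3 - (x : ℂ) * ξ₁ ^ 2 - ((a : ℂ) ^ 2 - 1) * ξ₁ + (x : ℂ) * (a : ℂ) ^ 2 = 0)
    (h2 : ξ₂ ^ 3 - (x : ℂ) * ξ₂ ^ 2 - ((a : ℂ) ^ 2 - 1) * ξ₂ + (x : ℂ) * (a : ℂ) ^ 2 = 0)
    (i1 : ξ₁.im ≠ 0) (i2 : ξ₂.im ≠ 0) : |ξ₁.im| = |ξ₂.im| := by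
  by_cases e1 : ξ₁ = ξ₂
  · rw [e1]
  by_cases e2 : ξ₁ = (starRingEnd ℂ) ξ₂
  · rw [e2, Complex.conj_im, abs_neg]
  exfalso
  have h3 : ((starRingEnd ℂ) ξ₂) ^ 3 - (x : ℂ) * ((starRingEnd ℂ) ξ₂) ^ 2
      - ((a : ℂ) ^ 2 - 1) * ((starRingEnd ℂ) ξ₂) + (x : ℂ) * (a : ℂ) ^ 2 = 0 := by
    have := congrArg (starRingEnd ℂ) h2
    simpa [map_sub, map_add, map_mul, map_pow, Complex.conj_ofReal] using this
  have d12 : ξ₁ - ξ₂ ≠ 0 := sub_ne_zero.2 e1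
  have d13 : ξ₁ - (starRingEnd ℂ) ξ₂ ≠ 0 := sub_ne_zero.2 e2
  have g12 : ξ₁^2 + ξ₁*ξ₂ + ξ₂^2 - (x:ℂ)*(ξ₁+ξ₂) - ((a:ℂ)^2-1) = 0 := by
    apply mul_left_cancel₀ d12
    rw [mul_zero]
    linear_combination h1 - h2
  have g13 : ξ₁^2 + ξ₁*((starRingEnd ℂ) ξ₂) + ((starRingEnd ℂ) ξ₂)^2
      - (x:ℂ)*(ξ₁+(starRingEnd ℂ) ξ₂) - ((a:ℂ)^2-1) = 0 := by
    apply mul_left_cancel₀ d13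
    rw [mul_zero]
    linear_combination h1 - h3
  have d23 : ξ₂ - (starRingEnd ℂ) ξ₂ ≠ 0 := by
    rw [sub_ne_zero]
    intro h
    exact i2 (Complex.conj_eq_iff_im.1 h.symm)
  have key : ξ₁ + ξ₂ + (starRingEnd ℂ) ξ₂ - (x:ℂ) = 0 := by
    apply mul_left_cancel₀ d23
    rw [mul_zero]
    linear_combination g12 - g13
  apply i1
  have := congrArg Complex.im key
  simpa [Complex.conj_im] using this

lemma rho_even (a : ℝ) (x : ℝ) : pasturRho a (-x) = pasturRho a x := by
  have hneg : ∀ (y : ℝ) (ξ : ℂ),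
      (ξ ^ 3 - (y : ℂ) * ξ ^ 2 - ((a : ℂ) ^ 2 - 1) * ξ + (y : ℂ) * (a : ℂ) ^ 2 = 0) →
      ((-ξ) ^ 3 - ((-y : ℝ) : ℂ) * (-ξ) ^ 2 - ((a : ℂ) ^ 2 - 1) * (-ξ)
        + ((-y : ℝ) : ℂ) * (a : ℂ) ^ 2 = 0) := by
    intro y ξ h
    push_cast
    linear_combination -h
  by_cases hex : ∃ ξ : ℂ, ξ ^ 3 - (x : ℂ) * ξ ^ 2 - ((a : ℂ) ^ 2 - 1) * ξ
      + (x : ℂ) * (a : ℂ) ^ 2 = 0 ∧ ξ.im ≠ 0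
  · have hex' : ∃ ξ : ℂ, ξ ^ 3 - ((-x : ℝ) : ℂ) * ξ ^ 2 - ((a : ℂ) ^ 2 - 1) * ξ
        + ((-x : ℝ) : ℂ) * (a : ℂ) ^ 2 = 0 ∧ ξ.im ≠ 0 := by
      obtain ⟨ξ, hξ, hi⟩ := hex
      exact ⟨-ξ, hneg x ξ hξ, by simpa using hi⟩
    rw [pasturRho, pasturRho, dif_pos hex', dif_pos hex]
    obtain ⟨hr', hi'⟩ := hex'.choose_spec
    obtain ⟨hr, hi⟩ := hex.choose_spec
    have hback : (-hex'.choose) ^ 3 - (x : ℂ) * (-hex'.choose) ^ 2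
        - ((a : ℂ) ^ 2 - 1) * (-hex'.choose) + (x : ℂ) * (a : ℂ) ^ 2 = 0 := by
      have := hneg (-x) hex'.choose hr'
      push_cast at this ⊢
      linear_combination this
    have him : (-hex'.choose).im ≠ 0 := by simpa using hi'
    have := im_unique hback hr him hi
    rw [← this]
    simp
  · have hex' : ¬ ∃ ξ : ℂ, ξ ^ 3 - ((-x : ℝ) : ℂ) * ξ ^ 2 - ((a : ℂ) ^ 2 - 1) * ξ
        + ((-x : ℝ) : ℂ) * (a : ℂ) ^ 2 = 0 ∧ ξ.im ≠ 0 := by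
      intro ⟨ξ, hξ, hi⟩
      apply hex
      refine ⟨-ξ, ?_, by simpa using hi⟩
      have := hneg (-x) ξ hξ
      push_cast at this ⊢
      linear_combination this
    rw [pasturRho, pasturRho, dif_neg hex', dif_neg hex]

lemma D_pos_of_band (ha : 1 < a) {x : ℝ} (hx : x ∈ Set.Ioo (z2 a) (z1 a)) :
    0 < Dc a x := by
  obtain ⟨h1, h2⟩ := hx
  have hz2 := z2_pos ha
  apply D_pos ha <;> nlinarith

lemma D_pos_of_band_neg (ha : 1 < a) {x : ℝ} (hx : x ∈ Set.Ioo (-z1 a) (-z2 a)) :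
    0 < Dc a x := by
  obtain ⟨h1, h2⟩ := hx
  have hz2 := z2_pos ha
  apply D_pos ha <;> nlinarith

/-- For `a > 1`, the Pastur density is real analytic on `(z₂,z₁)` and on
`(-z₁,-z₂)`, and it is even. -/
theorem statement2 (a : ℝ) (ha : 1 < a) :
    AnalyticOnNhd ℝ (pasturRho a) (Set.Ioo (z2 a) (z1 a)) ∧
    AnalyticOnNhd ℝ (pasturRho a) (Set.Ioo (-z1 a) (-z2 a)) ∧
    ∀ x : ℝ, pasturRho a (-x) = pasturRho a x := by
  refine ⟨fun x hx => analyticAt_rho ha (D_pos_of_band ha hx),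
    fun x hx => analyticAt_rho ha (D_pos_of_band_neg ha hx),
    rho_even a⟩

end
end

section
/- Let a > 1. As z → ∞ the three branches of the Pastur cubic satisfy ξ₁(z) = z − 1/z + O(1/z³), ξ₂(z) = a + 1/(2z) + O(1/z²), and ξ₃(z) = −a + 1/(2z) + O(1/z²). -/
open MeasureTheory Filter Topology Polynomial Asymptotics

noncomputable section

/-- the cut `[z₂, z₁]` viewed in `ℂ` -/
def cutR (a : ℝ) : Set ℂ := {z | z.im = 0 ∧ z2 a ≤ z.re ∧ z.re ≤ z1 a}

/-- the cut `[-z₁, -z₂]` viewed in `ℂ` -/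
def cutL (a : ℝ) : Set ℂ := {z | z.im = 0 ∧ -z1 a ≤ z.re ∧ z.re ≤ -z2 a}

/-- `ℂ ∖ ([-z₁,-z₂] ∪ [z₂,z₁])` -/
def Omega1 (a : ℝ) : Set ℂ := (cutL a ∪ cutR a)ᶜ

/-- `ℂ ∖ [z₂,z₁]` -/
def Omega2 (a : ℝ) : Set ℂ := (cutR a)ᶜ

/-- `ℂ ∖ [-z₁,-z₂]` -/
def Omega3 (a : ℝ) : Set ℂ := (cutL a)ᶜ

/-- the Pastur cubic at `z`, evaluated at `ξ` -/
def pasturCubic (a : ℝ) (z ξ : ℂ) : ℂ :=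
  ξ ^ 3 - z * ξ ^ 2 - ((a : ℂ) ^ 2 - 1) * ξ + z * (a : ℂ) ^ 2

/-- `ξ` is the branch `ξ₁`: holomorphic on `Ω₁`, solves the Pastur cubic,
and `ξ₁(z) - z → 0` as `z → ∞`. -/
def IsXi1 (a : ℝ) (ξ : ℂ → ℂ) : Prop :=
  DifferentiableOn ℂ ξ (Omega1 a) ∧
  (∀ z ∈ Omega1 a, pasturCubic a z (ξ z) = 0) ∧
  Tendsto (fun z : ℂ => ξ z - z) (Bornology.cobounded ℂ) (𝓝 0)

/-- `ξ` is the branch `ξ₂`: holomorphic on `Ω₂`, solves the Pastur cubic,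
and `ξ₂(z) → a` as `z → ∞`. -/
def IsXi2 (a : ℝ) (ξ : ℂ → ℂ) : Prop :=
  DifferentiableOn ℂ ξ (Omega2 a) ∧
  (∀ z ∈ Omega2 a, pasturCubic a z (ξ z) = 0) ∧
  Tendsto ξ (Bornology.cobounded ℂ) (𝓝 (a : ℂ))

/-- `ξ` is the branch `ξ₃`: holomorphic on `Ω₃`, solves the Pastur cubic,
and `ξ₃(z) → -a` as `z → ∞`. -/
def IsXi3 (a : ℝ) (ξ : ℂ → ℂ) : Prop :=
  DifferentiableOn ℂ ξ (Omega3 a) ∧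
  (∀ z ∈ Omega3 a, pasturCubic a z (ξ z) = 0) ∧
  Tendsto ξ (Bornology.cobounded ℂ) (𝓝 (-(a : ℂ)))

/-! The Pastur cubic factors as `(z - ξ)(ξ² - a²) = ξ`. Writing `u = 1/z`, the branch `ξ₂ = a + d`
satisfies `d = u ξ / ((1 - uξ)(ξ + a))`, and `ξ₁ = z + δ` satisfies `δ = -ξ / (ξ² - a²)`. Solving these
relations once more for the next correction writes `(ξ - main part)·zⁿ` as a rational expression in `u`,
`ξ` (resp. `δ`) that stays finite in the limit `u → 0`; this gives the `O(1/zⁿ)` bounds. The branch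
`ξ₃` is treated like `ξ₂`, with `-a` in place of `a`. -/

open Bornology

lemma isBigO_one_div_pow_of_tendsto_mul_pow {f : ℂ → ℂ} {n : ℕ} {c : ℂ}
    (h : Tendsto (fun z => f z * z ^ n) (cobounded ℂ) (𝓝 c)) :
    f =O[cobounded ℂ] fun z => 1 / z ^ n := by
  have hprod := (h.isBigO_one ℂ).mul (isBigO_refl (fun z : ℂ => 1 / z ^ n) (cobounded ℂ))
  refine EventuallyEq.trans_isBigO ?_ (by simpa using hprod)
  filter_upwards [eventually_ne_cobounded 0] with z hz
  field_simp

lemma pasturCubic_eq_zero_iff (a : ℝ) (z ξ : ℂ) :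
    pasturCubic a z ξ = 0 ↔ (z - ξ) * (ξ ^ 2 - (a : ℂ) ^ 2) = ξ := by
  rw [pasturCubic]
  constructor <;> intro h <;> linear_combination -h

lemma isBounded_cutR (a : ℝ) : IsBounded (cutR a) :=
  (isCompact_Icc.image Complex.continuous_ofReal).isBounded.subset
    fun z ⟨him, h₂, h₁⟩ => ⟨z.re, ⟨h₂, h₁⟩, Complex.ext rfl him.symm⟩

lemma isBounded_cutL (a : ℝ) : IsBounded (cutL a) :=
  (isCompact_Icc.image Complex.continuous_ofReal).isBounded.subset
    fun z ⟨him, h₁, h₂⟩ => ⟨z.re, ⟨h₁, h₂⟩, Complex.ext rfl him.symm⟩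

lemma omega1_mem_cobounded (a : ℝ) : Omega1 a ∈ cobounded ℂ :=
  isBounded_def.1 ((isBounded_cutL a).union (isBounded_cutR a))

lemma omega2_mem_cobounded (a : ℝ) : Omega2 a ∈ cobounded ℂ :=
  isBounded_def.1 (isBounded_cutR a)

lemma omega3_mem_cobounded (a : ℝ) : Omega3 a ∈ cobounded ℂ :=
  isBounded_def.1 (isBounded_cutL a)

lemma sub_add_one_div_mul_sq_eq {b z w : ℂ} (hrel : (z - w) * (w ^ 2 - b ^ 2) = w)
    (hz : z ≠ 0) (hzw : 1 - z⁻¹ * w ≠ 0) (hwb : w + b ≠ 0) :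
    (w - (b + 1 / (2 * z))) * z ^ 2
      = w * (1 - z⁻¹ * w)⁻¹ * ((1 - z⁻¹ * w)⁻¹ + (w + b) ^ 2) / (2 * (w + b) ^ 2) := by
  have hzw' : z - w ≠ 0 := by
    contrapose! hzw
    field_simp
    linear_combination hzw
  have h1 : 1 - z⁻¹ * w = (z - w) / z := by field_simp
  rw [h1]
  field_simp
  linear_combination (2 * z * (z - w) * (w + b) + z) * hrel

lemma isBigO_sub_add_one_div_of_tendsto {b : ℂ} (hb : b ≠ 0) {w : ℂ → ℂ}
    (hw : Tendsto w (cobounded ℂ) (𝓝 b))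
    (hrel : ∀ᶠ z in cobounded ℂ, (z - w z) * (w z ^ 2 - b ^ 2) = w z) :
    (fun z => w z - (b + 1 / (2 * z))) =O[cobounded ℂ] fun z => 1 / z ^ 2 := by
  have hv : Tendsto (fun z => 1 - z⁻¹ * w z) (cobounded ℂ) (𝓝 1) := by
    simpa using tendsto_const_nhds.sub (tendsto_inv₀_cobounded.mul hw)
  have hA : Tendsto (fun z => (1 - z⁻¹ * w z)⁻¹) (cobounded ℂ) (𝓝 1) := by
    simpa using hv.inv₀ one_ne_zero
  have h2b : b + b ≠ 0 := by simpa [← two_mul] using hb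
  have hwb : Tendsto (fun z => w z + b) (cobounded ℂ) (𝓝 (b + b)) := hw.add tendsto_const_nhds
  have hlim := ((hw.mul hA).mul (hA.add (hwb.pow 2))).div (tendsto_const_nhds.mul (hwb.pow 2))
    (mul_ne_zero two_ne_zero (pow_ne_zero 2 h2b))
  refine isBigO_one_div_pow_of_tendsto_mul_pow (hlim.congr' ?_)
  filter_upwards [hrel, eventually_ne_cobounded 0, hv.eventually_ne one_ne_zero,
    hwb.eventually_ne h2b] with z hz hz0 hv0 hwb0
  exact (sub_add_one_div_mul_sq_eq hz hz0 hv0 hwb0).symm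

lemma sub_sub_one_div_mul_cube_eq {c z w : ℂ} (hrel : (z - w) * (w ^ 2 - c) = w) (hz : z ≠ 0)
    (hW : (1 + z⁻¹ * (w - z)) ^ 2 - z⁻¹ ^ 2 * c ≠ 0) :
    (w - (z - 1 / z)) * z ^ 3
      = ((1 + z⁻¹ * (w - z)) ^ 2 - z⁻¹ ^ 2 * c)⁻¹ *
        ((w - z) ^ 2 - (1 + z⁻¹ * (w - z)) * ((1 + z⁻¹ * (w - z)) ^ 2 - z⁻¹ ^ 2 * c)⁻¹ - c) := by
  have hW' : (1 + z⁻¹ * (w - z)) ^ 2 - z⁻¹ ^ 2 * c = (w ^ 2 - c) / z ^ 2 := by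
    field_simp
    ring
  have hwc : w ^ 2 - c ≠ 0 := by
    contrapose! hW
    rw [hW', hW, zero_div]
  rw [hW']
  field_simp
  linear_combination (-(z * (w ^ 2 - c) + z)) * hrel

lemma isBigO_sub_sub_one_div_of_tendsto {c : ℂ} {w : ℂ → ℂ}
    (hw : Tendsto (fun z => w z - z) (cobounded ℂ) (𝓝 0))
    (hrel : ∀ᶠ z in cobounded ℂ, (z - w z) * (w z ^ 2 - c) = w z) :
    (fun z => w z - (z - 1 / z)) =O[cobounded ℂ] fun z => 1 / z ^ 3 := by
  have hu : Tendsto (fun z : ℂ => z⁻¹) (cobounded ℂ) (𝓝 0) := tendsto_inv₀_cobounded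
  have hW : Tendsto (fun z => (1 + z⁻¹ * (w z - z)) ^ 2 - z⁻¹ ^ 2 * c) (cobounded ℂ) (𝓝 1) := by
    simpa using ((tendsto_const_nhds (x := (1 : ℂ)).add (hu.mul hw)).pow 2).sub
      ((hu.pow 2).mul (tendsto_const_nhds (x := c)))
  have hWi := hW.inv₀ one_ne_zero
  have hlim := hWi.mul (((hw.pow 2).sub
    ((tendsto_const_nhds (x := (1 : ℂ)).add (hu.mul hw)).mul hWi)).sub
    (tendsto_const_nhds (x := c)))
  refine isBigO_one_div_pow_of_tendsto_mul_pow (hlim.congr' ?_)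
  filter_upwards [hrel, eventually_ne_cobounded 0, hW.eventually_ne one_ne_zero] with z hz hz0 hW0
  exact (sub_sub_one_div_mul_cube_eq hz hz0 hW0).symm

/-- As `z → ∞`, `ξ₁(z) = z - 1/z + O(1/z³)`,
`ξ₂(z) = a + 1/(2z) + O(1/z²)` and `ξ₃(z) = -a + 1/(2z) + O(1/z²)`. -/
theorem statement10 (a : ℝ) (ha : 1 < a) (ξ₁ ξ₂ ξ₃ : ℂ → ℂ)
    (hξ₁ : IsXi1 a ξ₁) (hξ₂ : IsXi2 a ξ₂) (hξ₃ : IsXi3 a ξ₃) :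
    ((fun z : ℂ => ξ₁ z - (z - 1 / z)) =O[Bornology.cobounded ℂ] fun z : ℂ => 1 / z ^ 3) ∧
    ((fun z : ℂ => ξ₂ z - ((a : ℂ) + 1 / (2 * z))) =O[Bornology.cobounded ℂ]
      fun z : ℂ => 1 / z ^ 2) ∧
    ((fun z : ℂ => ξ₃ z - (-(a : ℂ) + 1 / (2 * z))) =O[Bornology.cobounded ℂ]
      fun z : ℂ => 1 / z ^ 2) := by
  obtain ⟨-, hsol₁, hlim₁⟩ := hξ₁
  obtain ⟨-, hsol₂, hlim₂⟩ := hξ₂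
  obtain ⟨-, hsol₃, hlim₃⟩ := hξ₃
  have ha₀ : (a : ℂ) ≠ 0 := Complex.ofReal_ne_zero.2 (zero_lt_one.trans ha).ne'
  refine ⟨isBigO_sub_sub_one_div_of_tendsto (c := (a : ℂ) ^ 2) hlim₁ ?_,
    isBigO_sub_add_one_div_of_tendsto ha₀ hlim₂ ?_,
    isBigO_sub_add_one_div_of_tendsto (neg_ne_zero.2 ha₀) hlim₃ ?_⟩
  · filter_upwards [omega1_mem_cobounded a] with z hz
    exact (pasturCubic_eq_zero_iff a z _).1 (hsol₁ z hz)
  · filter_upwards [omega2_mem_cobounded a] with z hz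
    exact (pasturCubic_eq_zero_iff a z _).1 (hsol₂ z hz)
  · filter_upwards [omega3_mem_cobounded a] with z hz
    rw [neg_sq]
    exact (pasturCubic_eq_zero_iff a z _).1 (hsol₃ z hz)

end
end
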